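/- Let ‖·‖_s be the Wiener norm ‖f‖_s = ∑_k |f_k| e^{s|k|} and let ⫴f⫴_s² = ∑_k |f_k|² w_k(2s) with w_k(t) = ∏_i sinh(t k_i)/(t k_i). Then for any functions f, g on the n-torus, ⫴fg⫴_s ≤ ‖f‖_s · ⫴g⫴_s. In particular ⫴f⫴_s ≤ ‖f‖_s. -/
import Mathlib

open scoped BigOperators

noncomputable section

/-- ℓ¹-norm of an integer vector. -/
def l1 {n : ℕ} (k : Fin n → ℤ) : ℝ := ∑ i, |(k i : ℝ)|

/-- sinh x / x, extended by 1 at x = 0. -/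
def sr (x : ℝ) : ℝ := if x = 0 then 1 else Real.sinh x / x

/-- The weight w_k(t) = ∏ i, sinh (t k i) / (t k i). -/
def wt {n : ℕ} (t : ℝ) (k : Fin n → ℤ) : ℝ := ∏ i, sr (t * (k i : ℝ))

/-- Wiener (analytic) norm of a Fourier coefficient family. -/
def wiener {n : ℕ} (c : (Fin n → ℤ) → ℂ) (s : ℝ) : ℝ :=
  ∑' k, ‖c k‖ * Real.exp (s * l1 k)

/-- Strip-averaged L² norm of a Fourier coefficient family. -/
def stripL2 {n : ℕ} (c : (Fin n → ℤ) → ℂ) (s : ℝ) : ℝ :=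
  Real.sqrt (∑' k, ‖c k‖ ^ 2 * wt (2 * s) k)

theorem sinh_le_mul_exp (x : ℝ) : Real.sinh x ≤ x * Real.exp x := by
  have h2 := Real.exp_pos x
  have h3 : Real.exp (-(2*x)) = (Real.exp x)⁻¹^2 := by
    rw [← Real.exp_neg, ← Real.exp_nat_mul]; ring_nf
  have h4 : Real.exp x * (Real.exp x)⁻¹ = 1 := mul_inv_cancel₀ (ne_of_gt h2)
  rw [Real.sinh_eq, Real.exp_neg]
  nlinarith [Real.add_one_le_exp (-(2*x)), sq_nonneg (Real.exp x), sq_nonneg ((Real.exp x)⁻¹)]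

theorem sr_abs (x : ℝ) : sr |x| = sr x := by
  rcases abs_cases x with ⟨h, _⟩ | ⟨h, hneg⟩
  · rw [h]
  · rw [h]; unfold sr
    rcases eq_or_ne x 0 with rfl | hx
    · simp
    · rw [if_neg hx, if_neg (neg_ne_zero.mpr hx), Real.sinh_neg, neg_div_neg_eq]

theorem one_le_sr (x : ℝ) : 1 ≤ sr x := by
  rw [← sr_abs]
  unfold sr
  rcases eq_or_ne (|x|) 0 with h | h
  · rw [if_pos h]
  · rw [if_neg h]
    have hpos : 0 < |x| := (abs_nonneg x).lt_of_ne (Ne.symm h)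
    rw [le_div_iff₀ hpos, one_mul]
    exact (Real.self_lt_sinh_iff.mpr hpos).le

theorem sr_nonneg (x : ℝ) : 0 ≤ sr x := le_trans zero_le_one (one_le_sr x)

theorem sinh_le_mul_cosh {x : ℝ} (h : 0 ≤ x) : Real.sinh x ≤ x * Real.cosh x := by
  have hmono : MonotoneOn (fun y : ℝ => y * Real.cosh y - Real.sinh y) (Set.Ici 0) := by
    apply monotoneOn_of_deriv_nonneg (convex_Ici 0)
    · fun_prop
    · fun_prop
    · intro y hy
      simp only [interior_Ici, Set.mem_Ioi] at hy
      have hd : HasDerivAt (fun y : ℝ => y * Real.cosh y - Real.sinh y)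
          (1 * Real.cosh y + y * Real.sinh y - Real.cosh y) y :=
        ((hasDerivAt_id y).mul (Real.hasDerivAt_cosh y)).sub (Real.hasDerivAt_sinh y)
      rw [hd.deriv]
      nlinarith [Real.sinh_nonneg_iff.mpr hy.le]
  have := hmono Set.self_mem_Ici h h
  simp only [Real.cosh_zero, Real.sinh_zero, mul_one, zero_mul] at this
  linarith

theorem sr_mono {a b : ℝ} (ha : 0 ≤ a) (hab : a ≤ b) : sr a ≤ sr b := by
  rcases eq_or_lt_of_le ha with rfl | ha
  · simpa [sr] using one_le_sr b
  · have hb : 0 < b := lt_of_lt_of_le ha hab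
    unfold sr
    rw [if_neg ha.ne', if_neg hb.ne', div_le_div_iff₀ ha hb]
    have key : ∀ u : ℝ, 0 ≤ u → Real.sinh a * (a + u) ≤ Real.sinh (a + u) * a := by
      intro u hu
      rw [Real.sinh_add]
      have h1 : Real.sinh a ≤ a * Real.cosh a := sinh_le_mul_cosh ha.le
      have h2 : u ≤ Real.sinh u := Real.self_le_sinh_iff.mpr hu
      have h3 : 1 ≤ Real.cosh u := Real.one_le_cosh u
      have h4 : 0 ≤ Real.sinh a := Real.sinh_nonneg_iff.mpr ha.le
      have hA : u * Real.sinh a ≤ u * (a * Real.cosh a) :=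
        mul_le_mul_of_nonneg_left h1 hu
      have hB : u * (a * Real.cosh a) ≤ Real.sinh u * (a * Real.cosh a) :=
        mul_le_mul_of_nonneg_right h2 (mul_nonneg ha.le (Real.cosh_pos (x := a)).le)
      have hC : a * Real.sinh a ≤ (a * Real.sinh a) * Real.cosh u := by
        nlinarith [mul_nonneg ha.le h4]
      nlinarith
    have := key (b - a) (by linarith)
    have hab' : a + (b - a) = b := by ring
    rw [hab'] at this
    linarith

theorem sr_le_exp_sub {a b : ℝ} (hb : 0 ≤ b) (hab : b ≤ a) : sr a ≤ sr b * Real.exp (a - b) := by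
  rcases eq_or_lt_of_le hb with rfl | hb
  · have hsr0 : sr 0 = 1 := by simp [sr]
    rw [hsr0, one_mul, sub_zero]
    rcases eq_or_ne a 0 with rfl | ha
    · simp [sr]
    · rw [sr, if_neg ha]
      have ha' : 0 < a := lt_of_le_of_ne hab (Ne.symm ha)
      rw [div_le_iff₀ ha']
      linarith [sinh_le_mul_exp a, mul_le_mul_of_nonneg_left (Real.exp_le_exp.mpr (le_refl a)) ha'.le]
  · have ha : 0 < a := lt_of_lt_of_le hb hab
    unfold sr
    rw [if_neg ha.ne', if_neg hb.ne', div_mul_eq_mul_div, div_le_div_iff₀ ha hb]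
    set u := a - b with hudef
    have hu0 : 0 ≤ u := by simp only [hudef]; linarith
    have hab' : a = b + u := by simp only [hudef]; ring
    rw [hab', Real.sinh_add]
    have e1 : Real.exp u = Real.cosh u + Real.sinh u := (Real.cosh_add_sinh u).symm
    have h2 : Real.sinh u ≤ u * Real.exp u := sinh_le_mul_exp u
    have h3 : b * Real.exp (-b) ≤ Real.sinh b := by
      rw [Real.sinh_eq]
      have hid : Real.exp b = Real.exp (2*b) * Real.exp (-b) := by
        rw [← Real.exp_add]; ring_nf
      nlinarith [Real.add_one_le_exp (2*b), Real.exp_pos (-b)]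
    have h5 : 0 ≤ Real.sinh b := Real.sinh_nonneg_iff.mpr hb.le
    have h6 : 0 ≤ Real.sinh u := Real.sinh_nonneg_iff.mpr hu0
    have hbe : 0 ≤ b * Real.exp (-b) := mul_nonneg hb.le (Real.exp_pos _).le
    have hA : (b * Real.exp (-b)) * Real.sinh u ≤ (b * Real.exp (-b)) * (u * Real.exp u) :=
      mul_le_mul_of_nonneg_left h2 hbe
    have hB : (b * Real.exp (-b)) * (u * Real.exp u) ≤ Real.sinh b * (u * Real.exp u) :=
      mul_le_mul_of_nonneg_right h3 (mul_nonneg hu0 (Real.exp_pos u).le)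
    have h4 : Real.cosh b - Real.sinh b = Real.exp (-b) := Real.cosh_sub_sinh b
    have hC : (Real.cosh b - Real.sinh b) * (b * Real.sinh u) = Real.exp (-b) * (b * Real.sinh u) := by
      rw [h4]
    rw [e1] at hA hB ⊢
    nlinarith [hA, hB, hC]

theorem sr_lip (x y : ℝ) : sr x ≤ sr y * Real.exp |x - y| := by
  rw [← sr_abs x, ← sr_abs y]
  rcases le_total |x| |y| with h | h
  · calc sr |x| ≤ sr |y| := sr_mono (abs_nonneg x) h
      _ = sr |y| * 1 := (mul_one _).symm
      _ ≤ sr |y| * Real.exp |x - y| :=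
        mul_le_mul_of_nonneg_left (Real.one_le_exp (abs_nonneg _)) (sr_nonneg _)
  · calc sr |x| ≤ sr |y| * Real.exp (|x| - |y|) := sr_le_exp_sub (abs_nonneg y) h
      _ ≤ sr |y| * Real.exp |x - y| := by
        apply mul_le_mul_of_nonneg_left _ (sr_nonneg _)
        exact Real.exp_le_exp.mpr (abs_sub_abs_le_abs_sub x y)

theorem one_le_wt {n : ℕ} (t : ℝ) (k : Fin n → ℤ) : 1 ≤ wt t k := by
  rw [wt]
  calc (1:ℝ) = ∏ _i : Fin n, 1 := by simp
    _ ≤ ∏ i, sr (t * (k i : ℝ)) :=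
      Finset.prod_le_prod (fun _ _ => zero_le_one) (fun i _ => one_le_sr _)

theorem wt_nonneg {n : ℕ} (t : ℝ) (k : Fin n → ℤ) : 0 ≤ wt t k :=
  zero_le_one.trans (one_le_wt t k)

theorem l1_nonneg {n : ℕ} (k : Fin n → ℤ) : 0 ≤ l1 k :=
  Finset.sum_nonneg fun _ _ => abs_nonneg _

theorem wt_sub_le {n : ℕ} {t : ℝ} (ht : 0 ≤ t) (k l : Fin n → ℤ) :
    wt t k ≤ wt t l * Real.exp (t * l1 (k - l)) := by
  have step : ∀ i : Fin n, sr (t * (k i : ℝ)) ≤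
      sr (t * (l i : ℝ)) * Real.exp (t * |((k - l) i : ℤ)|) := by
    intro i
    have h := sr_lip (t * (k i : ℝ)) (t * (l i : ℝ))
    have habs : |t * (k i : ℝ) - t * (l i : ℝ)| = t * |((k - l) i : ℤ)| := by
      rw [← mul_sub, abs_mul, abs_of_nonneg ht]
      congr 1
      push_cast [Pi.sub_apply]
      rw [abs_sub_comm]
    rwa [habs] at h
  calc wt t k ≤ ∏ i, (sr (t * (l i : ℝ)) * Real.exp (t * |((k - l) i : ℤ)|)) :=
        Finset.prod_le_prod (fun i _ => sr_nonneg _) (fun i _ => step i)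
    _ = wt t l * Real.exp (t * l1 (k - l)) := by
        rw [Finset.prod_mul_distrib, ← Real.exp_sum]
        congr 1
        rw [l1, Finset.mul_sum]
        norm_num

theorem wt_le_exp {n : ℕ} {t : ℝ} (ht : 0 ≤ t) (k : Fin n → ℤ) :
    wt t k ≤ Real.exp (t * l1 k) := by
  have := wt_sub_le ht k 0
  simpa [wt, sr, l1] using this

set_option maxHeartbeats 2000000 in
theorem stripL2_wiener_module (n : ℕ) (s : ℝ) (hs : 0 ≤ s) (c d : (Fin n → ℤ) → ℂ)
    (hc : Summable fun k : Fin n → ℤ => ‖c k‖ * Real.exp (s * l1 k))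
    (hd : Summable fun k : Fin n → ℤ => ‖d k‖ ^ 2 * wt (2 * s) k) :
    stripL2 (fun k => ∑' l : Fin n → ℤ, c (k - l) * d l) s ≤ wiener c s * stripL2 d s ∧
    stripL2 c s ≤ wiener c s := by
  classical
  have hs2 : 0 ≤ 2 * s := by linarith
  set A : (Fin n → ℤ) → ℝ := fun k => ‖c k‖ * Real.exp (s * l1 k) with hAdef
  set B : (Fin n → ℤ) → ℝ := fun k => ‖d k‖ * Real.sqrt (wt (2 * s) k) with hBdef
  have hcA : Summable A := hc
  have hAnn : ∀ k, 0 ≤ A k := fun k => mul_nonneg (norm_nonneg _) (Real.exp_pos _).le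
  have hBnn : ∀ k, 0 ≤ B k := fun k => mul_nonneg (norm_nonneg _) (Real.sqrt_nonneg _)
  have hB2eq : ∀ k, B k ^ 2 = ‖d k‖ ^ 2 * wt (2 * s) k := by
    intro k
    rw [hBdef]
    simp only []
    rw [mul_pow, Real.sq_sqrt (wt_nonneg _ _)]
  have hB2 : Summable fun k => B k ^ 2 := by
    apply hd.congr
    intro k
    exact (hB2eq k).symm
  set SA : ℝ := ∑' k, A k with hSAdef
  set SB : ℝ := ∑' k, B k ^ 2 with hSBdef
  have hSAnn : 0 ≤ SA := tsum_nonneg hAnn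
  have hSBnn : 0 ≤ SB := tsum_nonneg fun k => sq_nonneg _
  have hAle : ∀ k, A k ≤ SA := fun k => Summable.le_tsum hcA k fun j _ => hAnn j
  -- the exp square identity
  have hexp_sq : ∀ x : ℝ, Real.exp (2 * s * x) = Real.exp (s * x) ^ 2 := by
    intro x
    rw [sq, ← Real.exp_add]
    ring_nf
  -- sqrt weight inequality
  have hwt_sqrt : ∀ k l : Fin n → ℤ, Real.sqrt (wt (2 * s) k) ≤
      Real.exp (s * l1 (k - l)) * Real.sqrt (wt (2 * s) l) := by
    intro k l
    have h1 : wt (2 * s) k ≤ wt (2 * s) l * Real.exp (s * l1 (k - l)) ^ 2 := by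
      have := wt_sub_le hs2 k l
      rwa [hexp_sq (l1 (k - l))] at this
    calc Real.sqrt (wt (2 * s) k) ≤ Real.sqrt (wt (2 * s) l * Real.exp (s * l1 (k - l)) ^ 2) :=
          Real.sqrt_le_sqrt h1
      _ = Real.sqrt (wt (2 * s) l) * Real.exp (s * l1 (k - l)) := by
          rw [Real.sqrt_mul (wt_nonneg _ _), Real.sqrt_sq (Real.exp_pos _).le]
      _ = Real.exp (s * l1 (k - l)) * Real.sqrt (wt (2 * s) l) := mul_comm _ _
  have hone_le_sqrtwt : ∀ k : Fin n → ℤ, 1 ≤ Real.sqrt (wt (2 * s) k) := by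
    intro k
    rw [show (1:ℝ) = Real.sqrt 1 by simp]
    exact Real.sqrt_le_sqrt (one_le_wt _ _)
  -- pointwise norm bound
  have hnorm : ∀ k l : Fin n → ℤ,
      ‖c (k - l) * d l‖ * Real.sqrt (wt (2 * s) k) ≤ A (k - l) * B l := by
    intro k l
    rw [norm_mul]
    have h1 := mul_le_mul_of_nonneg_left (hwt_sqrt k l)
      (mul_nonneg (norm_nonneg (c (k - l))) (norm_nonneg (d l)))
    have h2 : A (k - l) * B l = ‖c (k - l)‖ * ‖d l‖ *
        (Real.exp (s * l1 (k - l)) * Real.sqrt (wt (2 * s) l)) := by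
      rw [hAdef, hBdef]; ring
    linarith
  have hnorm' : ∀ k l : Fin n → ℤ, ‖c (k - l) * d l‖ ≤ A (k - l) * B l := by
    intro k l
    calc ‖c (k - l) * d l‖ = ‖c (k - l) * d l‖ * 1 := (mul_one _).symm
      _ ≤ ‖c (k - l) * d l‖ * Real.sqrt (wt (2 * s) k) :=
          mul_le_mul_of_nonneg_left (hone_le_sqrtwt k) (norm_nonneg _)
      _ ≤ A (k - l) * B l := hnorm k l
  -- summability of shifted families
  have hAshift : ∀ k : Fin n → ℤ, Summable fun l => A (k - l) := by
    intro k
    exact (Equiv.subLeft k).summable_iff.mpr hcA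
  have hAshift_tsum : ∀ k : Fin n → ℤ, ∑' l, A (k - l) = SA := by
    intro k
    exact (Equiv.subLeft k).tsum_eq A
  have hBle : ∀ l, B l ^ 2 ≤ SB := fun l => Summable.le_tsum hB2 l fun j _ => sq_nonneg _
  have hBb : ∀ l, B l ≤ Real.sqrt SB := by
    intro l
    rw [← Real.sqrt_sq (hBnn l)]
    exact Real.sqrt_le_sqrt (hBle l)
  have hAB : ∀ k : Fin n → ℤ, Summable fun l => A (k - l) * B l := by
    intro k
    apply Summable.of_nonneg_of_le (fun l => mul_nonneg (hAnn _) (hBnn _))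
      (fun l => mul_le_mul_of_nonneg_left (hBb l) (hAnn _))
    exact (hAshift k).mul_right _
  have hAB2 : ∀ k : Fin n → ℤ, Summable fun l => A (k - l) * B l ^ 2 := by
    intro k
    apply Summable.of_nonneg_of_le (fun l => mul_nonneg (hAnn _) (sq_nonneg _))
      (fun l => mul_le_mul_of_nonneg_left (hBle l) (hAnn _))
    exact (hAshift k).mul_right _
  have hcdn : ∀ k : Fin n → ℤ, Summable fun l => ‖c (k - l) * d l‖ := by
    intro k
    exact Summable.of_nonneg_of_le (fun l => norm_nonneg _) (hnorm' k) (hAB k)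
  set F : (Fin n → ℤ) → ℝ := fun k => ∑' l, A (k - l) * B l with hFdef
  set G : (Fin n → ℤ) → ℝ := fun k => ∑' l, A (k - l) * B l ^ 2 with hGdef
  have hGnn : ∀ k, 0 ≤ G k := fun k => tsum_nonneg fun l => mul_nonneg (hAnn _) (sq_nonneg _)
  have hGle : ∀ k, G k ≤ SA * SB := by
    intro k
    rw [hGdef]
    calc (∑' l, A (k - l) * B l ^ 2) ≤ ∑' l, A (k - l) * SB := by
          apply Summable.tsum_le_tsum _ (hAB2 k) ((hAshift k).mul_right _)
          exact fun l => mul_le_mul_of_nonneg_left (hBle l) (hAnn _)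
      _ = SA * SB := by rw [((hAshift k)).tsum_mul_right, hAshift_tsum k]
  -- step 1: pointwise bound ‖conv k‖ √wt ≤ F k
  have hFk : ∀ k : Fin n → ℤ,
      ‖∑' l, c (k - l) * d l‖ * Real.sqrt (wt (2 * s) k) ≤ F k := by
    intro k
    have h1 : ‖∑' l, c (k - l) * d l‖ ≤ ∑' l, ‖c (k - l) * d l‖ :=
      norm_tsum_le_tsum_norm (hcdn k)
    calc ‖∑' l, c (k - l) * d l‖ * Real.sqrt (wt (2 * s) k)
        ≤ (∑' l, ‖c (k - l) * d l‖) * Real.sqrt (wt (2 * s) k) :=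
          mul_le_mul_of_nonneg_right h1 (Real.sqrt_nonneg _)
      _ = ∑' l, ‖c (k - l) * d l‖ * Real.sqrt (wt (2 * s) k) :=
          ((hcdn k).tsum_mul_right _).symm
      _ ≤ F k := by
          apply Summable.tsum_le_tsum (fun l => hnorm k l) _ (hAB k)
          exact (hcdn k).mul_right _
  have hFnn : ∀ k, 0 ≤ F k := fun k => tsum_nonneg fun l => mul_nonneg (hAnn _) (hBnn _)
  -- Cauchy-Schwarz: F k ^ 2 ≤ SA * G k
  have hCS : ∀ k : Fin n → ℤ, F k ^ 2 ≤ SA * G k := by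
    intro k
    have hFle : F k ≤ Real.sqrt (SA * G k) := by
      apply Summable.tsum_le_of_sum_le (hAB k)
      intro t
      have cs := Finset.sum_mul_sq_le_sq_mul_sq t
        (fun l => Real.sqrt (A (k - l))) (fun l => Real.sqrt (A (k - l)) * B l)
      have e1 : ∀ l, Real.sqrt (A (k - l)) * (Real.sqrt (A (k - l)) * B l) = A (k - l) * B l := by
        intro l
        rw [← mul_assoc, Real.mul_self_sqrt (hAnn _)]
      have e2 : ∀ l, Real.sqrt (A (k - l)) ^ 2 = A (k - l) := fun l => Real.sq_sqrt (hAnn _)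
      have e3 : ∀ l, (Real.sqrt (A (k - l)) * B l) ^ 2 = A (k - l) * B l ^ 2 := by
        intro l
        rw [mul_pow, Real.sq_sqrt (hAnn _)]
      rw [Finset.sum_congr rfl fun l _ => e1 l, Finset.sum_congr rfl fun l _ => e2 l,
        Finset.sum_congr rfl fun l _ => e3 l] at cs
      have hsum1 : (∑ l ∈ t, A (k - l)) ≤ SA := by
        rw [← hAshift_tsum k]
        exact Summable.sum_le_tsum t (fun l _ => hAnn _) (hAshift k)
      have hsum2 : (∑ l ∈ t, A (k - l) * B l ^ 2) ≤ G k := by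
        rw [hGdef]
        exact Summable.sum_le_tsum t (fun l _ => mul_nonneg (hAnn _) (sq_nonneg _)) (hAB2 k)
      have hsq : (∑ l ∈ t, A (k - l) * B l) ^ 2 ≤ SA * G k := by
        calc (∑ l ∈ t, A (k - l) * B l) ^ 2
            ≤ (∑ l ∈ t, A (k - l)) * ∑ l ∈ t, A (k - l) * B l ^ 2 := cs
          _ ≤ SA * G k := by
              apply mul_le_mul hsum1 hsum2
                (Finset.sum_nonneg fun l _ => mul_nonneg (hAnn _) (sq_nonneg _)) hSAnn
      calc (∑ l ∈ t, A (k - l) * B l)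
          = Real.sqrt ((∑ l ∈ t, A (k - l) * B l) ^ 2) :=
            (Real.sqrt_sq (Finset.sum_nonneg fun l _ => mul_nonneg (hAnn _) (hBnn _))).symm
        _ ≤ Real.sqrt (SA * G k) := Real.sqrt_le_sqrt hsq
    calc F k ^ 2 ≤ Real.sqrt (SA * G k) ^ 2 := by
          apply pow_le_pow_left₀ (hFnn k) hFle
      _ = SA * G k := Real.sq_sqrt (mul_nonneg hSAnn (hGnn k))
  -- Fubini for G
  set P : ((Fin n → ℤ) × (Fin n → ℤ)) → ℝ := fun p => A (p.1 - p.2) * B p.2 ^ 2 with hPdef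
  have hQ : Summable fun p : (Fin n → ℤ) × (Fin n → ℤ) => A p.1 * B p.2 ^ 2 :=
    hcA.mul_of_nonneg hB2 hAnn fun l => sq_nonneg _
  set eqv : ((Fin n → ℤ) × (Fin n → ℤ)) ≃ ((Fin n → ℤ) × (Fin n → ℤ)) :=
    { toFun := fun p => (p.1 + p.2, p.2)
      invFun := fun p => (p.1 - p.2, p.2)
      left_inv := fun p => by simp
      right_inv := fun p => by simp } with heqv
  have hPeqv : (P ∘ eqv) = fun p : (Fin n → ℤ) × (Fin n → ℤ) => A p.1 * B p.2 ^ 2 := by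
    funext p
    simp [hPdef, heqv]
  have hP : Summable P := by
    apply eqv.summable_iff.mp
    rw [hPeqv]
    exact hQ
  have hG : Summable G := by
    have := hP.prod
    exact this.congr fun k => rfl
  have htsumG : ∑' k, G k = SA * SB := by
    have h1 : ∑' k, G k = ∑' p, P p := (Summable.tsum_prod hP).symm
    have h2 : ∑' p, P p = ∑' p : (Fin n → ℤ) × (Fin n → ℤ), A p.1 * B p.2 ^ 2 := by
      rw [← eqv.tsum_eq P]
      exact tsum_congr fun p => congrFun hPeqv p
    have h3 : ∑' p : (Fin n → ℤ) × (Fin n → ℤ), A p.1 * B p.2 ^ 2 = SA * SB := by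
      rw [Summable.tsum_prod hQ]
      calc ∑' k, ∑' l, A k * B l ^ 2 = ∑' k, A k * SB := by
            congr 1
            funext k
            exact hB2.tsum_mul_left (A k)
        _ = SA * SB := hcA.tsum_mul_right SB
    rw [h1, h2, h3]
  -- assemble part 1
  have hptwise : ∀ k : Fin n → ℤ,
      ‖∑' l, c (k - l) * d l‖ ^ 2 * wt (2 * s) k ≤ SA * G k := by
    intro k
    have h1 : ‖∑' l, c (k - l) * d l‖ ^ 2 * wt (2 * s) k
        = (‖∑' l, c (k - l) * d l‖ * Real.sqrt (wt (2 * s) k)) ^ 2 := by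
      rw [mul_pow, Real.sq_sqrt (wt_nonneg _ _)]
    rw [h1]
    calc (‖∑' l, c (k - l) * d l‖ * Real.sqrt (wt (2 * s) k)) ^ 2 ≤ F k ^ 2 := by
          apply pow_le_pow_left₀ (mul_nonneg (norm_nonneg _) (Real.sqrt_nonneg _)) (hFk k)
      _ ≤ SA * G k := hCS k
  have hsum_part1 : (∑' k, ‖∑' l, c (k - l) * d l‖ ^ 2 * wt (2 * s) k) ≤ SA * (SA * SB) := by
    have hRS : Summable fun k => SA * G k := hG.mul_left SA
    have hLS : Summable fun k => ‖∑' l, c (k - l) * d l‖ ^ 2 * wt (2 * s) k :=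
      Summable.of_nonneg_of_le (fun k => mul_nonneg (sq_nonneg _) (wt_nonneg _ _)) hptwise hRS
    calc (∑' k, ‖∑' l, c (k - l) * d l‖ ^ 2 * wt (2 * s) k) ≤ ∑' k, SA * G k :=
          Summable.tsum_le_tsum hptwise hLS hRS
      _ = SA * ∑' k, G k := hG.tsum_mul_left SA
      _ = SA * (SA * SB) := by rw [htsumG]
  constructor
  · -- part 1
    have hstripd : stripL2 d s = Real.sqrt SB := by
      rw [stripL2, hSBdef]
      congr 1
      exact (tsum_congr fun k => (hB2eq k).symm)
    have hwc : wiener c s = SA := rfl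
    rw [stripL2, hwc, hstripd]
    calc Real.sqrt (∑' k, ‖∑' l, c (k - l) * d l‖ ^ 2 * wt (2 * s) k)
        ≤ Real.sqrt (SA * (SA * SB)) := Real.sqrt_le_sqrt hsum_part1
      _ = SA * Real.sqrt SB := by
          rw [show SA * (SA * SB) = SA ^ 2 * SB by ring, Real.sqrt_mul (sq_nonneg _),
            Real.sqrt_sq hSAnn]
  · -- part 2
    have hpt2 : ∀ k, ‖c k‖ ^ 2 * wt (2 * s) k ≤ A k * SA := by
      intro k
      calc ‖c k‖ ^ 2 * wt (2 * s) k ≤ ‖c k‖ ^ 2 * Real.exp (2 * s * l1 k) :=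
            mul_le_mul_of_nonneg_left (wt_le_exp hs2 k) (sq_nonneg _)
        _ = A k ^ 2 := by rw [hexp_sq, hAdef]; ring
        _ = A k * A k := sq (A k) ▸ (sq (A k)).symm ▸ by ring
        _ ≤ A k * SA := mul_le_mul_of_nonneg_left (hAle k) (hAnn k)
    have hRS : Summable fun k => A k * SA := hcA.mul_right SA
    have hLS : Summable fun k => ‖c k‖ ^ 2 * wt (2 * s) k :=
      Summable.of_nonneg_of_le (fun k => mul_nonneg (sq_nonneg _) (wt_nonneg _ _)) hpt2 hRS
    have hsum : (∑' k, ‖c k‖ ^ 2 * wt (2 * s) k) ≤ SA * SA := by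
      calc (∑' k, ‖c k‖ ^ 2 * wt (2 * s) k) ≤ ∑' k, A k * SA := Summable.tsum_le_tsum hpt2 hLS hRS
        _ = SA * SA := hcA.tsum_mul_right SA
    have hwc : wiener c s = SA := rfl
    rw [stripL2, hwc]
    calc Real.sqrt (∑' k, ‖c k‖ ^ 2 * wt (2 * s) k) ≤ Real.sqrt (SA * SA) :=
          Real.sqrt_le_sqrt hsum
      _ = SA := by rw [show SA * SA = SA ^ 2 by ring, Real.sqrt_sq hSAnn]
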